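/- arXiv:1801.08595 — 4 statements merged into one kernel-verified Lean document; each statement's English description precedes it below -/
import Mathlib

section
/- Let Φ be an IFS on ℝ satisfying the open set condition, with self-similar set F. Then there exist m ∈ ℕ₀ and a subset Λ ⊆ Σ^m such that the set U_Λ = ⋃_{ω∈Σ*} φ_ω(⋃_{u∈Λ} φ_u(I)) is a strong and compatible feasible open set for Φ (i.e. U_Λ is a feasible open set with U_Λ ∩ F ≠ ∅ and ∂U_Λ ⊆ F). -/
open Set Filter MeasureTheory Metric Topology

/-- An iterated function system (IFS) on `ℝ`: a finite family of contracting
similarities `φ i` with similarity ratios `r i ∈ (0,1)`. -/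
structure IFS (N : ℕ) where
  φ : Fin N → ℝ → ℝ
  r : Fin N → ℝ
  r_pos : ∀ i, 0 < r i
  r_lt_one : ∀ i, r i < 1
  similar : ∀ i x y, |φ i x - φ i y| = r i * |x - y|

namespace IFS

variable {N : ℕ}

/-- The natural action `ΦA = ⋃ i φ i(A)` of an IFS on subsets of `ℝ`. -/
def map (Φ : IFS N) (A : Set ℝ) : Set ℝ := ⋃ i, Φ.φ i '' A

/-- A nonempty open set `O` is feasible for `Φ` if `φ i (O) ⊆ O` for all `i`
and the images `φ i (O)` are pairwise disjoint. -/
def Feasible (Φ : IFS N) (O : Set ℝ) : Prop :=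
  O.Nonempty ∧ IsOpen O ∧ (∀ i, Φ.φ i '' O ⊆ O) ∧
    ∀ i j, i ≠ j → Disjoint (Φ.φ i '' O) (Φ.φ j '' O)

/-- The open set condition: existence of a feasible open set. -/
def OSC (Φ : IFS N) : Prop := ∃ O : Set ℝ, Φ.Feasible O

/-- `F` is the self-similar set (attractor) of `Φ`: the (unique) nonempty
compact set with `ΦF = F`. -/
def IsAttractor (Φ : IFS N) (F : Set ℝ) : Prop :=
  F.Nonempty ∧ IsCompact F ∧ Φ.map F = F

/-- `Φ` is lattice if the additive subgroup of `ℝ` generated by the `log (r i)`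
is discrete, equivalently all `log (r i)` lie in `aℤ` for some `a > 0`. -/
def IsLattice (Φ : IFS N) : Prop :=
  ∃ a : ℝ, 0 < a ∧ ∀ i, ∃ k : ℤ, Real.log (Φ.r i) = k * a

/-- `ρ = e^{-a}` is the base of the lattice IFS `Φ`, where `a > 0` is maximal
with `log (r i) ∈ aℤ` for all `i`. -/
def IsLatticeBase (Φ : IFS N) (ρ : ℝ) : Prop :=
  ∃ a : ℝ, 0 < a ∧ ρ = Real.exp (-a) ∧
    (∀ i, ∃ k : ℤ, Real.log (Φ.r i) = k * a) ∧
    ∀ b : ℝ, 0 < b → (∀ i, ∃ k : ℤ, Real.log (Φ.r i) = k * b) → b ≤ a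

/-- For a finite word `ω = ω₁⋯ωₙ`, the composition `φ_ω = φ_{ω₁} ∘ ⋯ ∘ φ_{ωₙ}`
(the empty word giving the identity). -/
def wordMap (Φ : IFS N) (ω : List (Fin N)) : ℝ → ℝ :=
  ω.foldr (fun i f => Φ.φ i ∘ f) id

end IFS

/-- `y` is the unique nearest point of `x` in `F`. -/
def UniqueNearest (F : Set ℝ) (x y : ℝ) : Prop :=
  y ∈ F ∧ dist x y = Metric.infDist x F ∧
    ∀ z ∈ F, dist x z = Metric.infDist x F → z = y

/-- The projection condition for a feasible open set `O`:
`φ i (O) ⊆ closure (π_F⁻¹ (φ i (F)))` for all `i`, where `π_F` is the metric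
projection onto `F` (defined where the nearest point in `F` is unique). -/
def IFS.ProjCond {N : ℕ} (Φ : IFS N) (F O : Set ℝ) : Prop :=
  ∀ i, Φ.φ i '' O ⊆ closure {x : ℝ | ∃ y, UniqueNearest F x y ∧ y ∈ Φ.φ i '' F}

/-- `F` has Minkowski dimension `D`:
`1 - log λ(F_ε) / log ε → D` as `ε → 0+`. -/
def HasMinkowskiDim (F : Set ℝ) (D : ℝ) : Prop :=
  Filter.Tendsto
    (fun ε : ℝ => 1 - Real.log (volume (Metric.cthickening ε F)).toReal / Real.log ε)
    (𝓝[>] (0:ℝ)) (𝓝 D)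

/-- `F` (of Minkowski dimension `D`) is Minkowski measurable:
`ε^(D-1) λ(F_ε)` converges to a positive finite limit as `ε → 0+`. -/
def MinkowskiMeasurable (F : Set ℝ) (D : ℝ) : Prop :=
  ∃ M : ℝ, 0 < M ∧
    Filter.Tendsto (fun ε : ℝ => ε ^ (D - 1) * (volume (Metric.cthickening ε F)).toReal)
      (𝓝[>] (0:ℝ)) (𝓝 M)

/-- The set `U_Λ = ⋃_{ω ∈ Σ*} φ_ω (⋃_{u ∈ Λ} φ_u (I))`, where `I` is the
interior of the convex hull of `F`. -/
def IFS.ULambda {N : ℕ} (Φ : IFS N) (F : Set ℝ) (Λ : Set (List (Fin N))) : Set ℝ :=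
  ⋃ ω : List (Fin N),
    Φ.wordMap ω '' (⋃ u ∈ Λ, Φ.wordMap u '' interior (convexHull ℝ F))

/-!
For a word `τ`, call neighbours of `τ` the words `σ` of the cut at ratio `r_τ` (the words whose
ratio has just dropped to `r_τ`) with `φ_σ(F)` within `r_τ` of `φ_τ(F)`. Comparing the lengths of
the disjoint intervals `φ_σ(J)`, `J ⊆ O`, bounds the number of neighbours uniformly; since
prefixing by `w` embeds the neighbours of `τ` into those of `wτ`, a `τ` with the most neighbours
has exactly `w` times its neighbours as neighbours of `wτ`. Taking `u = τv` with `φ_u(I)` within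
`r_τ / 2` of `φ_τ(F)`, the sets `φ_i(U_{u})` are disjoint: where `φ_{iwu}(I)` met
`φ_{jw'u}(I)`, a prefix of `jw'τ` would be a neighbour of `iwτ`, hence start with `i`.
-/

theorem exists_sub_eq_mul_sub_of_abs_sub_eq {f : ℝ → ℝ} {r : ℝ}
    (h : ∀ x y, |f x - f y| = r * |x - y|) : ∃ e, ∀ x y, f x - f y = e * (x - y) := by
  have key : ∀ x, f x - f 0 = (f 1 - f 0) * x := by
    intro x
    have hsq : ∀ x y, (f x - f y) ^ 2 = r ^ 2 * (x - y) ^ 2 := fun x y => by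
      rw [← sq_abs, h, mul_pow, sq_abs]
    have h₁ := hsq x 0
    have h₂ := hsq 1 0
    have h₃ := hsq x 1
    -- polarization: the three squared distances determine the product
    have hprod : (f 1 - f 0) * (f x - f 0) = r ^ 2 * x := by nlinarith
    by_cases he : f 1 - f 0 = 0
    · rw [he] at h₂ ⊢
      have : (f x - f 0) ^ 2 = 0 := by nlinarith
      simpa using this
    · apply mul_left_cancel₀ he
      rw [hprod]; nlinarith
  exact ⟨f 1 - f 0, fun x y => by linear_combination key x - key y⟩

theorem Continuous.image_uIoo_of_injective {f : ℝ → ℝ} (hc : Continuous f)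
    (hi : Function.Injective f) (a b : ℝ) : f '' uIoo a b = uIoo (f a) (f b) := by
  wlog hab : a ≤ b generalizing a b
  · rw [uIoo_comm, this b a (le_of_not_ge hab), uIoo_comm]
  rw [uIoo_of_le hab]
  rcases hc.strictMono_of_inj hi with hf | hf
  · rw [hc.image_Ioo_of_strictMono hf, uIoo_of_le (hf.monotone hab)]
  · rw [hc.continuousOn.image_Ioo_of_strictAntiOn hab (hf.strictAntiOn _),
      uIoo_of_ge (hf.antitone hab)]

theorem interior_convexHull_eq_Ioo {F : Set ℝ} (hc : IsCompact F) (hne : F.Nonempty) :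
    interior (convexHull ℝ F) = Ioo (sInf F) (sSup F) := by
  have hsub : F ⊆ Icc (sInf F) (sSup F) := fun x hx =>
    ⟨csInf_le hc.bddBelow hx, le_csSup hc.bddAbove hx⟩
  have hhull : convexHull ℝ F = Icc (sInf F) (sSup F) := by
    refine (convexHull_min hsub (convex_Icc _ _)).antisymm ?_
    rw [← segment_eq_Icc (hsub (hc.sInf_mem hne)).2, ← convexHull_pair]
    exact convexHull_mono (pair_subset (hc.sInf_mem hne) (hc.sSup_mem hne))
  rw [hhull, interior_Icc]

theorem Set.finite_and_ncard_le_of_forall_finset {α : Type*} {s : Set α} {M : ℕ}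
    (h : ∀ t : Finset α, ↑t ⊆ s → t.card ≤ M) : s.Finite ∧ s.ncard ≤ M := by
  have hfin : s.Finite := by
    by_contra hinf
    obtain ⟨t, hts, hcard⟩ := Set.Infinite.exists_subset_card_eq hinf (M + 1)
    have := h t hts
    omega
  exact ⟨hfin, by simpa [Set.ncard_eq_toFinset_card _ hfin] using h hfin.toFinset (by simp)⟩

theorem MeasureTheory.card_mul_le_measure_of_pairwiseDisjoint {ι α : Type*}
    [MeasurableSpace α] {μ : Measure α} {S : Finset ι} {s : ι → Set α} {t : Set α}
    {m : ENNReal} (hd : (S : Set ι).PairwiseDisjoint s) (hs : ∀ i ∈ S, MeasurableSet (s i))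
    (hst : ∀ i ∈ S, s i ⊆ t) (hm : ∀ i ∈ S, m ≤ μ (s i)) : S.card * m ≤ μ t :=
  calc S.card * m = ∑ _ ∈ S, m := by simp
    _ ≤ ∑ i ∈ S, μ (s i) := Finset.sum_le_sum hm
    _ = μ (⋃ i ∈ S, s i) := (measure_biUnion_finset hd hs).symm
    _ ≤ μ t := measure_mono (iUnion₂_subset hst)

theorem List.exists_eq_append_cons_of_not_prefix {α : Type*} :
    ∀ {σ τ : List α}, ¬σ <+: τ → ¬τ <+: σ →
      ∃ (c : List α) (i j : α) (σ' τ' : List α), i ≠ j ∧ σ = c ++ i :: σ' ∧ τ = c ++ j :: τ'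
  | [], _, h, _ => absurd (List.nil_prefix) h
  | _ :: _, [], _, h => absurd (List.nil_prefix) h
  | i :: σ, j :: τ, h₁, h₂ => by
    by_cases hij : i = j
    · subst hij
      obtain ⟨c, k, l, σ', τ', hkl, rfl, rfl⟩ :=
        exists_eq_append_cons_of_not_prefix (σ := σ) (τ := τ) (by simpa using h₁)
          (by simpa using h₂)
      exact ⟨i :: c, k, l, σ', τ', hkl, rfl, rfl⟩
    · exact ⟨[], i, j, σ, τ, hij, rfl, rfl⟩

theorem Set.eq_or_eq_of_mem_closure_uIoo {c d x : ℝ} (hx : x ∈ closure (uIoo c d))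
    (hx' : x ∉ uIoo c d) : x = c ∨ x = d := by
  have hmem : x ∈ uIcc c d := closure_minimal uIoo_subset_uIcc_self isClosed_Icc hx
  rcases (Icc_sdiff_Ioo_same inf_le_sup).subset ⟨hmem, hx'⟩ with rfl | rfl
  exacts [min_choice c d, max_choice c d]

namespace IFS

section Words

variable {N : ℕ} (Φ : IFS N)

def ratio (ω : List (Fin N)) : ℝ := (ω.map Φ.r).prod

@[simp] theorem ratio_nil : Φ.ratio [] = 1 := rfl

@[simp] theorem ratio_cons (i : Fin N) (ω : List (Fin N)) :
    Φ.ratio (i :: ω) = Φ.r i * Φ.ratio ω := by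
  simp [ratio]

@[simp] theorem ratio_append (ω ω' : List (Fin N)) :
    Φ.ratio (ω ++ ω') = Φ.ratio ω * Φ.ratio ω' := by
  simp [ratio]

theorem ratio_pos (ω : List (Fin N)) : 0 < Φ.ratio ω := by
  induction ω with
  | nil => simp
  | cons i ω ih => simpa using mul_pos (Φ.r_pos i) ih

theorem ratio_le_one (ω : List (Fin N)) : Φ.ratio ω ≤ 1 := by
  induction ω with
  | nil => simp
  | cons i ω ih =>
    simpa using mul_le_one₀ (Φ.r_lt_one i).le (Φ.ratio_pos ω).le ih

theorem ratio_lt_one {ω : List (Fin N)} (hω : ω ≠ []) : Φ.ratio ω < 1 := by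
  obtain ⟨i, ω, rfl⟩ := List.exists_cons_of_ne_nil hω
  simpa using mul_lt_one_of_nonneg_of_lt_one_left (Φ.r_pos i).le (Φ.r_lt_one i) (Φ.ratio_le_one ω)

theorem ratio_le_ratio_of_prefix {σ τ : List (Fin N)} (h : σ <+: τ) : Φ.ratio τ ≤ Φ.ratio σ := by
  obtain ⟨t, rfl⟩ := h
  simpa using mul_le_of_le_one_right (Φ.ratio_pos σ).le (Φ.ratio_le_one t)

theorem exists_pos_forall_le_r : ∃ c, 0 < c ∧ ∀ i, c ≤ Φ.r i := by
  rcases isEmpty_or_nonempty (Fin N) with _ | _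
  · exact ⟨1, one_pos, isEmptyElim⟩
  · obtain ⟨i, hi⟩ := Finite.exists_min Φ.r
    exact ⟨Φ.r i, Φ.r_pos i, hi⟩

theorem exists_lt_one_forall_r_le : ∃ c, 0 ≤ c ∧ c < 1 ∧ ∀ i, Φ.r i ≤ c := by
  rcases isEmpty_or_nonempty (Fin N) with _ | _
  · exact ⟨0, le_rfl, one_pos, isEmptyElim⟩
  · obtain ⟨i, hi⟩ := Finite.exists_max Φ.r
    exact ⟨Φ.r i, (Φ.r_pos i).le, Φ.r_lt_one i, hi⟩

theorem exists_ratio_mul_lt {C ε : ℝ} (hC : 0 ≤ C) (hε : 0 < ε) :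
    ∃ L, ∀ ω : List (Fin N), L ≤ ω.length → Φ.ratio ω * C < ε := by
  obtain ⟨c, hc₀, hc₁, hrc⟩ := Φ.exists_lt_one_forall_r_le
  have hratio : ∀ ω : List (Fin N), Φ.ratio ω ≤ c ^ ω.length := by
    intro ω
    induction ω with
    | nil => simp
    | cons i ω ih =>
      rw [ratio_cons, List.length_cons, pow_succ']
      exact mul_le_mul (hrc i) ih (Φ.ratio_pos ω).le hc₀
  have hlim := (tendsto_pow_atTop_nhds_zero_of_lt_one hc₀ hc₁).mul_const C
  rw [zero_mul] at hlim
  obtain ⟨L, hL⟩ := Filter.eventually_atTop.1 (hlim.eventually (gt_mem_nhds hε))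
  exact ⟨L, fun ω hω => (mul_le_mul_of_nonneg_right (hratio ω) hC).trans_lt (hL _ hω)⟩

@[simp] theorem wordMap_nil : Φ.wordMap [] = id := rfl

@[simp] theorem wordMap_cons (i : Fin N) (ω : List (Fin N)) :
    Φ.wordMap (i :: ω) = Φ.φ i ∘ Φ.wordMap ω := rfl

theorem wordMap_append (ω ω' : List (Fin N)) :
    Φ.wordMap (ω ++ ω') = Φ.wordMap ω ∘ Φ.wordMap ω' := by
  induction ω with
  | nil => rfl
  | cons i ω ih => simp [ih, Function.comp_assoc]

theorem abs_wordMap_sub (ω : List (Fin N)) (x y : ℝ) :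
    |Φ.wordMap ω x - Φ.wordMap ω y| = Φ.ratio ω * |x - y| := by
  induction ω with
  | nil => simp
  | cons i ω ih => simp [Φ.similar, ih, mul_assoc]

theorem wordMap_injective (ω : List (Fin N)) : Function.Injective (Φ.wordMap ω) := fun x y h => by
  have := Φ.abs_wordMap_sub ω x y
  rw [h, sub_self, abs_zero, eq_comm, mul_eq_zero] at this
  exact sub_eq_zero.1 (abs_eq_zero.1 (this.resolve_left (Φ.ratio_pos ω).ne'))

theorem continuous_wordMap (ω : List (Fin N)) : Continuous (Φ.wordMap ω) :=
  (LipschitzWith.of_dist_le' (K := Φ.ratio ω) fun x y => by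
    simp only [Real.dist_eq, Φ.abs_wordMap_sub, le_refl]).continuous

theorem image_wordMap_uIoo (ω : List (Fin N)) (a b : ℝ) :
    Φ.wordMap ω '' uIoo a b = uIoo (Φ.wordMap ω a) (Φ.wordMap ω b) :=
  (Φ.continuous_wordMap ω).image_uIoo_of_injective (Φ.wordMap_injective ω) a b

theorem volume_image_wordMap_uIoo (ω : List (Fin N)) (a b : ℝ) :
    MeasureTheory.volume (Φ.wordMap ω '' uIoo a b) = ENNReal.ofReal (Φ.ratio ω * |b - a|) := by
  rw [image_wordMap_uIoo, Real.volume_uIoo, abs_wordMap_sub]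

theorem image_wordMap_subset {A : Set ℝ} (hA : ∀ i, Φ.φ i '' A ⊆ A) (ω : List (Fin N)) :
    Φ.wordMap ω '' A ⊆ A := by
  induction ω with
  | nil => simp
  | cons i ω ih => rw [wordMap_cons, image_comp]; exact (image_mono ih).trans (hA i)

end Words

variable {N : ℕ} {Φ : IFS N} {F O : Set ℝ}

theorem Feasible.disjoint_image_wordMap (hO : Φ.Feasible O) {σ τ : List (Fin N)}
    (h₁ : ¬σ <+: τ) (h₂ : ¬τ <+: σ) :
    Disjoint (Φ.wordMap σ '' O) (Φ.wordMap τ '' O) := by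
  obtain ⟨c, i, j, σ', τ', hij, rfl, rfl⟩ := List.exists_eq_append_cons_of_not_prefix h₁ h₂
  simp only [wordMap_append, wordMap_cons, image_comp]
  refine disjoint_image_of_injective (Φ.wordMap_injective c) ?_
  exact (hO.2.2.2 i j hij).mono (image_mono (Φ.image_wordMap_subset hO.2.2.1 σ'))
    (image_mono (Φ.image_wordMap_subset hO.2.2.1 τ'))

variable (Φ) in
def IsCut (ρ : ℝ) (σ : List (Fin N)) : Prop :=
  Φ.ratio σ ≤ ρ ∧ ρ < Φ.ratio σ.dropLast

theorem IsCut.ne_nil {ρ : ℝ} {σ : List (Fin N)} (hσ : Φ.IsCut ρ σ) : σ ≠ [] := by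
  rintro rfl
  exact (hσ.1.trans_lt hσ.2).false

theorem IsCut.not_prefix {ρ : ℝ} {σ τ : List (Fin N)} (hσ : Φ.IsCut ρ σ) (hτ : Φ.IsCut ρ τ)
    (hne : σ ≠ τ) : ¬σ <+: τ := by
  rintro ⟨t, rfl⟩
  have ht : t ≠ [] := by rintro rfl; simp at hne
  have := Φ.ratio_le_ratio_of_prefix (σ := σ) (τ := (σ ++ t).dropLast)
    ⟨t.dropLast, (List.dropLast_append_of_ne_nil ht).symm⟩
  linarith [hσ.1, hτ.2]

theorem exists_prefix_isCut {ρ : ℝ} (hρ : ρ < 1) {c : List (Fin N)} (hc : Φ.ratio c ≤ ρ) :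
    ∃ σ, σ <+: c ∧ Φ.IsCut ρ σ := by
  induction c using List.reverseRecOn with
  | nil => simp at hc; linarith
  | append_singleton c i ih =>
    by_cases h : ρ < Φ.ratio c
    · exact ⟨c ++ [i], List.prefix_refl _, hc, by simpa using h⟩
    · obtain ⟨σ, hσc, hσ⟩ := ih (not_lt.1 h)
      exact ⟨σ, hσc.trans (List.prefix_append _ _), hσ⟩

theorem IsCut.mul_lt_ratio {ρ c : ℝ} {σ : List (Fin N)} (hσ : Φ.IsCut ρ σ) (hc : ∀ i, c ≤ Φ.r i) :
    ρ * c < Φ.ratio σ := by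
  have hne := hσ.ne_nil
  obtain ⟨hσρ, hρσ⟩ := hσ
  have hρ : 0 < ρ := (Φ.ratio_pos σ).trans_le hσρ
  rw [← List.dropLast_append_getLast hne, ratio_append] at hσρ ⊢
  simp only [ratio_cons, ratio_nil, mul_one] at hσρ ⊢
  nlinarith [hc (σ.getLast hne), Φ.r_pos (σ.getLast hne)]

variable (Φ F) in
def neighbors (τ : List (Fin N)) : Set (List (Fin N)) :=
  {σ | Φ.IsCut (Φ.ratio τ) σ ∧
    ∃ p ∈ Φ.wordMap σ '' F, ∃ q ∈ Φ.wordMap τ '' F, |p - q| ≤ Φ.ratio τ}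

theorem image_append_neighbors_subset (w τ : List (Fin N)) :
    (w ++ ·) '' Φ.neighbors F τ ⊆ Φ.neighbors F (w ++ τ) := by
  rintro _ ⟨σ, ⟨⟨hσ₁, hσ₂⟩, _, ⟨p, hp, rfl⟩, _, ⟨q, hq, rfl⟩, hpq⟩, rfl⟩
  have hw := Φ.ratio_pos w
  refine ⟨⟨?_, ?_⟩, _, ⟨p, hp, rfl⟩, _, ⟨q, hq, rfl⟩, ?_⟩
  · simpa using mul_le_mul_of_nonneg_left hσ₁ hw.le
  · rw [List.dropLast_append_of_ne_nil (IsCut.ne_nil ⟨hσ₁, hσ₂⟩)]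
    simpa using mul_lt_mul_of_pos_left hσ₂ hw
  · simp only [wordMap_append, Function.comp_apply, abs_wordMap_sub, ratio_append]
    exact mul_le_mul_of_nonneg_left hpq hw.le

theorem abs_wordMap_sub_le_of_mem_neighbors {K : Set ℝ} (hK : Bornology.IsBounded K)
    (hFK : F ⊆ K) {σ τ : List (Fin N)} (hσ : σ ∈ Φ.neighbors F τ) {z x : ℝ} (hz : z ∈ K)
    (hx : x ∈ K) :
    |Φ.wordMap σ z - Φ.wordMap τ x| ≤ Φ.ratio τ * (2 * diam K + 1) := by
  obtain ⟨⟨hστ, -⟩, _, ⟨p, hp, rfl⟩, _, ⟨q, hq, rfl⟩, hpq⟩ := hσ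
  have hdiam : ∀ {y y'}, y ∈ K → y' ∈ K → |y - y'| ≤ diam K := fun hy hy' =>
    Real.dist_eq _ _ ▸ dist_le_diam_of_mem hK hy hy'
  have h₁ : |Φ.wordMap σ z - Φ.wordMap σ p| ≤ Φ.ratio τ * diam K := by
    rw [abs_wordMap_sub]
    exact mul_le_mul hστ (hdiam hz (hFK hp)) (abs_nonneg _) (Φ.ratio_pos τ).le
  have h₃ : |Φ.wordMap τ q - Φ.wordMap τ x| ≤ Φ.ratio τ * diam K := by
    rw [abs_wordMap_sub]
    exact mul_le_mul_of_nonneg_left (hdiam (hFK hq) hx) (Φ.ratio_pos τ).le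
  linarith [abs_sub_le (Φ.wordMap σ z) (Φ.wordMap σ p) (Φ.wordMap τ x),
    abs_sub_le (Φ.wordMap σ p) (Φ.wordMap τ q) (Φ.wordMap τ x)]

/-- For neighbours `σ` of `τ` the intervals `φ_σ(B(x₀, δ)) ⊆ φ_σ(O)` are disjoint, have length
at least `2 δ c r_τ` (`c` the least ratio), and lie in a ball of radius `≍ r_τ` about `φ_τ(x₀)`. -/
theorem Feasible.exists_ncard_neighbors_le (hO : Φ.Feasible O) (hF : Bornology.IsBounded F) :
    ∃ M : ℕ, ∀ τ, (Φ.neighbors F τ).Finite ∧ (Φ.neighbors F τ).ncard ≤ M := by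
  obtain ⟨x₀, hx₀⟩ := hO.1
  obtain ⟨δ, hδ, hJO⟩ := Metric.isOpen_iff.1 hO.2.1 x₀ hx₀
  obtain ⟨c, hc₀, hc⟩ := Φ.exists_pos_forall_le_r
  have hJ : ball x₀ δ = uIoo (x₀ - δ) (x₀ + δ) := by
    rw [uIoo_of_le (by linarith), Real.ball_eq_Ioo]
  have hK : Bornology.IsBounded (ball x₀ δ ∪ F) := isBounded_ball.union hF
  set D := diam (ball x₀ δ ∪ F)
  refine ⟨⌊(2 * D + 1) / (c * δ)⌋₊, fun τ => Set.finite_and_ncard_le_of_forall_finset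
    fun S hS => ?_⟩
  have hdisj : (S : Set (List (Fin N))).PairwiseDisjoint (fun σ => Φ.wordMap σ '' ball x₀ δ) :=
    fun σ hσ σ' hσ' hne => (hO.disjoint_image_wordMap ((hS hσ).1.not_prefix (hS hσ').1 hne)
      ((hS hσ').1.not_prefix (hS hσ).1 hne.symm)).mono (image_mono hJO) (image_mono hJO)
  have hmeas : ∀ σ ∈ S, MeasurableSet (Φ.wordMap σ '' ball x₀ δ) := fun σ _ => by
    rw [hJ, image_wordMap_uIoo]
    exact measurableSet_Ioo
  have hsub : ∀ σ ∈ S, Φ.wordMap σ '' ball x₀ δ ⊆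
      closedBall (Φ.wordMap τ x₀) (Φ.ratio τ * (2 * D + 1)) := by
    rintro σ hσ _ ⟨z, hz, rfl⟩
    rw [mem_closedBall, Real.dist_eq]
    exact abs_wordMap_sub_le_of_mem_neighbors hK subset_union_right (hS hσ) (Or.inl hz)
      (Or.inl (mem_ball_self hδ))
  have hvol : ∀ σ ∈ S, ENNReal.ofReal (Φ.ratio τ * c * (2 * δ)) ≤
      volume (Φ.wordMap σ '' ball x₀ δ) := fun σ hσ => by
    rw [hJ, volume_image_wordMap_uIoo,
      show |x₀ + δ - (x₀ - δ)| = 2 * δ by rw [abs_of_pos (by linarith)]; ring]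
    exact ENNReal.ofReal_le_ofReal (mul_le_mul_of_nonneg_right
      ((hS hσ).1.mul_lt_ratio hc).le (by positivity))
  have key := card_mul_le_measure_of_pairwiseDisjoint hdisj hmeas hsub hvol
  have hρ := Φ.ratio_pos τ
  rw [Real.volume_closedBall, ← ENNReal.ofReal_natCast, ← ENNReal.ofReal_mul (by positivity),
    ENNReal.ofReal_le_ofReal_iff (by positivity)] at key
  refine Nat.le_floor ((le_div_iff₀ (by positivity)).2 ?_)
  nlinarith

theorem exists_neighbors_append_eq
    (hM : ∃ M : ℕ, ∀ τ, (Φ.neighbors F τ).Finite ∧ (Φ.neighbors F τ).ncard ≤ M) :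
    ∃ τ, ∀ w, Φ.neighbors F (w ++ τ) = (w ++ ·) '' Φ.neighbors F τ := by
  obtain ⟨M, hM⟩ := hM
  set counts : Set ℕ := range fun τ => (Φ.neighbors F τ).ncard
  have hbdd : BddAbove counts := ⟨M, forall_mem_range.2 fun τ => (hM τ).2⟩
  obtain ⟨τ, hτ : (Φ.neighbors F τ).ncard = sSup counts⟩ := Nat.sSup_mem (range_nonempty _) hbdd
  refine ⟨τ, fun w => (Set.eq_of_subset_of_ncard_le (image_append_neighbors_subset w τ) ?_
    (hM _).1).symm⟩
  rw [ncard_image_of_injective _ (List.append_right_injective w), hτ]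
  exact le_csSup hbdd (mem_range_self (w ++ τ))

theorem eq_of_mem_neighbors_append (hF : ∀ i, Φ.φ i '' F ⊆ F) {τ : List (Fin N)}
    (hτ : ∀ w, Φ.neighbors F (w ++ τ) = (w ++ ·) '' Φ.neighbors F τ)
    {i j : Fin N} {w w' : List (Fin N)} (hr : Φ.ratio (j :: w') ≤ Φ.ratio (i :: w)) {p q : ℝ}
    (hp : p ∈ Φ.wordMap (i :: w ++ τ) '' F) (hq : q ∈ Φ.wordMap (j :: w' ++ τ) '' F)
    (hpq : |q - p| ≤ Φ.ratio (i :: w ++ τ)) : i = j := by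
  have hρ : Φ.ratio (j :: w' ++ τ) ≤ Φ.ratio (i :: w ++ τ) := by
    simpa only [ratio_append] using mul_le_mul_of_nonneg_right hr (Φ.ratio_pos τ).le
  obtain ⟨σ, ⟨t, ht⟩, hσ⟩ := exists_prefix_isCut (Φ.ratio_lt_one (List.cons_ne_nil _ _)) hρ
  have hqσ : q ∈ Φ.wordMap σ '' F := by
    rw [← ht, wordMap_append, image_comp] at hq
    exact image_mono (Φ.image_wordMap_subset hF t) hq
  obtain ⟨σ', -, rfl⟩ : σ ∈ (i :: w ++ ·) '' Φ.neighbors F τ := by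
    rw [← hτ]
    exact ⟨hσ, q, hqσ, p, hp, hpq⟩
  simpa using congrArg List.head? ht

theorem IsAttractor.image_subset (hF : Φ.IsAttractor F) (i : Fin N) : Φ.φ i '' F ⊆ F := by
  conv_rhs => rw [← hF.2.2]
  exact subset_iUnion (fun j => Φ.φ j '' F) i

theorem IsAttractor.interior_convexHull (hF : Φ.IsAttractor F) :
    interior (convexHull ℝ F) = uIoo (sInf F) (sSup F) := by
  rw [interior_convexHull_eq_Ioo hF.2.1 hF.1,
    uIoo_of_le (Real.sInf_le_sSup F hF.2.1.bddBelow hF.2.1.bddAbove)]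

theorem IsAttractor.abs_wordMap_sub_le (hF : Φ.IsAttractor F) (w : List (Fin N)) {z : ℝ}
    (hz : z ∈ interior (convexHull ℝ F)) :
    |Φ.wordMap w z - Φ.wordMap w (sInf F)| ≤ Φ.ratio w * (sSup F - sInf F) := by
  rw [interior_convexHull_eq_Ioo hF.2.1 hF.1] at hz
  rw [abs_wordMap_sub, abs_of_pos (sub_pos.2 hz.1)]
  exact mul_le_mul_of_nonneg_left (by linarith [hz.2]) (Φ.ratio_pos w).le

/-- If `F` were a point, all `φ_i` would be homotheties about it and would commute, so
`φ_i φ_j x = φ_j φ_i x` would lie in both `φ_i(O)` and `φ_j(O)`. -/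
theorem IsAttractor.sInf_lt_sSup (hF : Φ.IsAttractor F) (hO : Φ.Feasible O) {i j : Fin N}
    (hij : i ≠ j) : sInf F < sSup F := by
  obtain ⟨hne, hc, -⟩ := id hF
  refine (Real.sInf_le_sSup F hc.bddBelow hc.bddAbove).lt_of_ne fun h => ?_
  have hfix : ∀ k, Φ.φ k (sInf F) = sInf F := fun k => by
    have hk : Φ.φ k (sInf F) ∈ F := hF.image_subset k ⟨_, hc.sInf_mem hne, rfl⟩
    exact le_antisymm ((le_csSup hc.bddAbove hk).trans h.ge) (csInf_le hc.bddBelow hk)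
  obtain ⟨e, he⟩ := exists_sub_eq_mul_sub_of_abs_sub_eq (Φ.similar i)
  obtain ⟨e', he'⟩ := exists_sub_eq_mul_sub_of_abs_sub_eq (Φ.similar j)
  obtain ⟨x, hx⟩ := hO.1
  have hcomm : Φ.φ i (Φ.φ j x) = Φ.φ j (Φ.φ i x) := by
    have h₁ := he (Φ.φ j x) (sInf F)
    have h₂ := he' x (sInf F)
    have h₃ := he' (Φ.φ i x) (sInf F)
    have h₄ := he x (sInf F)
    rw [hfix] at h₁ h₂ h₃ h₄
    linear_combination h₁ - h₃ + e * h₂ - e' * h₄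
  exact disjoint_left.1 (hO.2.2.2 i j hij) ⟨_, hO.2.2.1 j ⟨x, hx, rfl⟩, rfl⟩
    (hcomm ▸ ⟨_, hO.2.2.1 i ⟨x, hx, rfl⟩, rfl⟩)

/-- Otherwise `F = {a, b}`, and `φ_i` would map it injectively into itself while contracting
the distance `b - a`. -/
theorem IsAttractor.exists_mem_Ioo (hF : Φ.IsAttractor F) (hab : sInf F < sSup F) (i : Fin N) :
    ∃ z ∈ F, z ∈ Ioo (sInf F) (sSup F) := by
  by_contra! hmid
  have hends : ∀ z ∈ F, z = sInf F ∨ z = sSup F := fun z hz => by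
    have h₁ := csInf_le hF.2.1.bddBelow hz
    have h₂ := le_csSup hF.2.1.bddAbove hz
    have h₃ := hmid z hz
    rw [mem_Ioo, not_and_or, not_lt, not_lt] at h₃
    rcases h₃ with h₃ | h₃
    exacts [Or.inl (le_antisymm h₃ h₁), Or.inr (le_antisymm h₂ h₃)]
  have ha := hends _ (hF.image_subset i ⟨_, hF.2.1.sInf_mem hF.1, rfl⟩)
  have hb := hends _ (hF.image_subset i ⟨_, hF.2.1.sSup_mem hF.1, rfl⟩)
  have hd := Φ.similar i (sInf F) (sSup F)
  have hba : |sInf F - sSup F| = sSup F - sInf F := by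
    rw [abs_sub_comm, abs_of_pos (sub_pos.2 hab)]
  have hr₀ := Φ.r_pos i
  have hr₁ := Φ.r_lt_one i
  rcases ha with ha | ha <;> rcases hb with hb | hb <;>
    simp only [ha, hb, sub_self, abs_zero, hba, abs_sub_comm (sSup F)] at hd <;> nlinarith

theorem ULambda_eq_biUnion (Λ : Set (List (Fin N))) :
    Φ.ULambda F Λ =
      ⋃ w ∈ {w | ∃ u ∈ Λ, u <:+ w}, Φ.wordMap w '' interior (convexHull ℝ F) := by
  ext x
  simp only [ULambda, mem_iUnion, mem_image, mem_ofPred_eq, exists_prop]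
  constructor
  · rintro ⟨ω, _, ⟨u, hu, z, hz, rfl⟩, rfl⟩
    exact ⟨ω ++ u, ⟨u, hu, ω, rfl⟩, z, hz, by rw [wordMap_append, Function.comp_apply]⟩
  · rintro ⟨_, ⟨u, hu, ω, rfl⟩, z, hz, rfl⟩
    exact ⟨ω, _, ⟨u, hu, z, hz, rfl⟩, by rw [wordMap_append, Function.comp_apply]⟩

theorem isOpen_ULambda (hF : Φ.IsAttractor F) (Λ : Set (List (Fin N))) :
    IsOpen (Φ.ULambda F Λ) := by
  rw [ULambda_eq_biUnion, hF.interior_convexHull]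
  exact isOpen_biUnion fun w _ => by rw [image_wordMap_uIoo]; exact isOpen_Ioo

theorem image_ULambda_subset (Λ : Set (List (Fin N))) (i : Fin N) :
    Φ.φ i '' Φ.ULambda F Λ ⊆ Φ.ULambda F Λ := by
  rintro _ ⟨x, hx, rfl⟩
  obtain ⟨ω, hω⟩ := mem_iUnion.1 hx
  exact mem_iUnion.2 ⟨i :: ω, by rw [wordMap_cons, image_comp]; exact mem_image_of_mem _ hω⟩

theorem ULambda_inter_nonempty (hF : Φ.IsAttractor F) {z : ℝ} (hzF : z ∈ F)
    (hz : z ∈ interior (convexHull ℝ F)) {Λ : Set (List (Fin N))} {u : List (Fin N)}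
    (hu : u ∈ Λ) : (Φ.ULambda F Λ ∩ F).Nonempty :=
  ⟨Φ.wordMap u z, mem_iUnion.2 ⟨[], by simpa using ⟨u, hu, z, hz, rfl⟩⟩,
    Φ.image_wordMap_subset hF.image_subset u ⟨z, hzF, rfl⟩⟩

/-- A boundary point of `U_Λ` off `F` would be at positive distance from `F`, hence away from
all small pieces `φ_w(I)`; so it would lie in the closure of one of the finitely many large
pieces but not in the piece itself, making it an endpoint of that piece, a point of `F`. -/
theorem frontier_ULambda_subset (hF : Φ.IsAttractor F) (Λ : Set (List (Fin N))) :
    frontier (Φ.ULambda F Λ) ⊆ F := by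
  intro x hx
  rw [(isOpen_ULambda hF Λ).frontier_eq, ULambda_eq_biUnion] at hx
  obtain ⟨hxU, hxU'⟩ := hx
  set W := {w | ∃ u ∈ Λ, u <:+ w}
  set I := interior (convexHull ℝ F) with hI
  have hends : ∀ w, Φ.wordMap w (sInf F) ∈ F ∧ Φ.wordMap w (sSup F) ∈ F := fun w =>
    ⟨Φ.image_wordMap_subset hF.image_subset w ⟨_, hF.2.1.sInf_mem hF.1, rfl⟩,
      Φ.image_wordMap_subset hF.image_subset w ⟨_, hF.2.1.sSup_mem hF.1, rfl⟩⟩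
  by_contra hxF
  obtain ⟨δ, hδ, hball⟩ := Metric.isOpen_iff.1 hF.2.1.isClosed.isOpen_compl x hxF
  obtain ⟨L, hL⟩ := Φ.exists_ratio_mul_lt
    (sub_nonneg.2 (Real.sInf_le_sSup F hF.2.1.bddBelow hF.2.1.bddAbove)) (half_pos hδ)
  have hlong : x ∉ closure (⋃ w ∈ W ∩ {w | w.length < L}ᶜ, Φ.wordMap w '' I) := by
    rw [Metric.mem_closure_iff]
    push Not
    refine ⟨δ / 2, half_pos hδ, ?_⟩
    simp only [mem_iUnion, mem_image]
    rintro _ ⟨w, ⟨-, hw⟩, z, hz, rfl⟩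
    have h₁ : δ ≤ dist x (Φ.wordMap w (sInf F)) := not_lt.1 fun h =>
      hball (by rwa [Metric.mem_ball, dist_comm]) (hends w).1
    have h₂ := hF.abs_wordMap_sub_le w hz
    rw [← Real.dist_eq] at h₂
    linarith [dist_triangle x (Φ.wordMap w z) (Φ.wordMap w (sInf F)), hL w (not_lt.1 hw)]
  rw [← inter_union_compl W {w | w.length < L}, biUnion_union, closure_union,
    ((List.finite_length_lt _ L).subset inter_subset_right).closure_biUnion] at hxU
  obtain ⟨w, hw, hxw⟩ := mem_iUnion₂.1 (hxU.resolve_right hlong)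
  rw [hI, hF.interior_convexHull, image_wordMap_uIoo] at hxw
  have hxw' : x ∉ uIoo (Φ.wordMap w (sInf F)) (Φ.wordMap w (sSup F)) := fun h =>
    hxU' (mem_iUnion₂.2 ⟨w, hw.1, by rwa [hI, hF.interior_convexHull, image_wordMap_uIoo]⟩)
  rcases eq_or_eq_of_mem_closure_uIoo hxw hxw' with rfl | rfl
  exacts [hxF (hends w).1, hxF (hends w).2]

theorem exists_abs_sub_le_of_mem_image_ULambda (hF : Φ.IsAttractor F) {τ v : List (Fin N)}
    (hv : Φ.ratio v * (sSup F - sInf F) ≤ 1 / 2) {k : Fin N} {x : ℝ}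
    (hx : x ∈ Φ.φ k '' Φ.ULambda F {τ ++ v}) :
    ∃ w, ∃ p ∈ Φ.wordMap (k :: w ++ τ) '' F, |x - p| ≤ Φ.ratio (k :: w) * Φ.ratio τ / 2 := by
  simp only [ULambda, mem_image, mem_iUnion, mem_singleton_iff, exists_prop] at hx
  obtain ⟨_, ⟨ω, _, ⟨_, rfl, z, hz, rfl⟩, rfl⟩, rfl⟩ := hx
  refine ⟨ω, _, ⟨Φ.wordMap v (sInf F),
    Φ.image_wordMap_subset hF.image_subset v ⟨_, hF.2.1.sInf_mem hF.1, rfl⟩, rfl⟩, ?_⟩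
  have hx : Φ.φ k (Φ.wordMap ω (Φ.wordMap (τ ++ v) z)) =
      Φ.wordMap (k :: ω ++ τ) (Φ.wordMap v z) := by
    simp [wordMap_append]
  rw [hx, abs_wordMap_sub, ratio_append, mul_assoc, mul_div_assoc]
  refine mul_le_mul_of_nonneg_left ?_ (Φ.ratio_pos _).le
  calc Φ.ratio τ * |Φ.wordMap v z - Φ.wordMap v (sInf F)|
      ≤ Φ.ratio τ * (Φ.ratio v * (sSup F - sInf F)) :=
        mul_le_mul_of_nonneg_left (hF.abs_wordMap_sub_le v hz) (Φ.ratio_pos τ).le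
    _ ≤ Φ.ratio τ / 2 := by nlinarith [Φ.ratio_pos τ]

theorem disjoint_image_ULambda (hF : Φ.IsAttractor F) {τ v : List (Fin N)}
    (hτ : ∀ w, Φ.neighbors F (w ++ τ) = (w ++ ·) '' Φ.neighbors F τ)
    (hv : Φ.ratio v * (sSup F - sInf F) ≤ 1 / 2) {i j : Fin N} (hij : i ≠ j) :
    Disjoint (Φ.φ i '' Φ.ULambda F {τ ++ v}) (Φ.φ j '' Φ.ULambda F {τ ++ v}) := by
  refine disjoint_left.2 fun x hxi hxj => ?_
  obtain ⟨w, p, hp, hxp⟩ := exists_abs_sub_le_of_mem_image_ULambda hF hv hxi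
  obtain ⟨w', q, hq, hxq⟩ := exists_abs_sub_le_of_mem_image_ULambda hF hv hxj
  have hpq : |q - p| ≤ |x - p| + |x - q| := by
    linarith [abs_sub_le q x p, abs_sub_comm q x]
  rcases le_total (Φ.ratio (j :: w')) (Φ.ratio (i :: w)) with h | h
  · refine hij (eq_of_mem_neighbors_append hF.image_subset hτ h hp hq ?_)
    rw [ratio_append]
    linarith [mul_le_mul_of_nonneg_right h (Φ.ratio_pos τ).le]
  · refine hij (eq_of_mem_neighbors_append hF.image_subset hτ h hq hp ?_).symm
    rw [ratio_append, abs_sub_comm]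
    linarith [mul_le_mul_of_nonneg_right h (Φ.ratio_pos τ).le]

end IFS

/-- Under OSC there exist `m ∈ ℕ₀` and `Λ ⊆ Σ^m` such that `U_Λ`
is a strong and compatible feasible open set for `Φ`. -/
theorem exists_ULambda_strong_compatible_feasible {N : ℕ} (hN : 2 ≤ N)
    (Φ : IFS N) (F : Set ℝ) (hOSC : Φ.OSC) (hF : Φ.IsAttractor F) :
    ∃ (m : ℕ) (Λ : Set (List (Fin N))), (∀ u ∈ Λ, u.length = m) ∧
      Φ.Feasible (Φ.ULambda F Λ) ∧ (Φ.ULambda F Λ ∩ F).Nonempty ∧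
      frontier (Φ.ULambda F Λ) ⊆ F := by
  obtain ⟨O, hO⟩ := hOSC
  let i₀ : Fin N := ⟨0, by omega⟩
  have hab : sInf F < sSup F := hF.sInf_lt_sSup hO (i := i₀) (j := ⟨1, hN⟩) (by simp [i₀])
  obtain ⟨z, hzF, hz⟩ := hF.exists_mem_Ioo hab i₀
  obtain ⟨τ, hτ⟩ := IFS.exists_neighbors_append_eq (hO.exists_ncard_neighbors_le hF.2.1.isBounded)
  obtain ⟨L, hL⟩ := Φ.exists_ratio_mul_lt (sub_nonneg.2 hab.le) one_half_pos
  set u := τ ++ List.replicate L i₀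
  have hinter : (Φ.ULambda F {u} ∩ F).Nonempty :=
    IFS.ULambda_inter_nonempty hF hzF (by rwa [interior_convexHull_eq_Ioo hF.2.1 hF.1]) rfl
  refine ⟨u.length, {u}, fun _ h => h ▸ rfl, ⟨hinter.mono inter_subset_left,
    IFS.isOpen_ULambda hF _, IFS.image_ULambda_subset _, fun i j hij => ?_⟩, hinter,
    IFS.frontier_ULambda_subset hF _⟩
  exact IFS.disjoint_image_ULambda hF hτ (hL _ (List.length_replicate ..).ge).le hij
end

section
/- Let F ⊂ ℝ be a nontrivial self-similar set generated by a lattice IFS Φ with base r, and suppose Φ satisfies the open set condition with a strong feasible open set O that satisfies the projection condition. Let D be the Minkowski dimension of F, Γ = O \ ΦO, and g = sup{dist(x, F) : x ∈ Γ}. Then the series Σ_{ℓ=0}^∞ r^{ℓ(D−1)} λ(F_{r^ℓ ε} ∩ Γ) converges uniformly in ε on (rg, g]: for every δ > 0 there is n ∈ ℕ such that Σ_{ℓ=n}^∞ r^{ℓ(D−1)} λ(F_{r^ℓ ε} ∩ Γ) < δ for all ε ∈ (rg, g]. -/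
open Set Filter MeasureTheory Metric Topology

/-!
Let `s` be the similarity dimension, `∑ rᵢ ^ s = 1`, and `f δ = λ(F_δ ∩ O)`. The open set
condition gives the renewal inequality `λ(F_δ ∩ Γ) + ∑ rᵢ f(δ/rᵢ) ≤ f δ`, and `F = ΦF` gives
`λ(F_δ) ≤ ∑ rᵢ λ(F_{δ/rᵢ})`. Multiplied by `δ^(s-1)` these say that `δ^(s-1) f δ` dominates, and
`δ^(s-1) λ(F_δ)` is dominated by, the weighted mean with weights `rᵢ ^ s` of its values at the
scales `δ/rᵢ`. Iterating from one scale down, `δ^(s-1) λ(F_δ)` stays bounded, and `δ^(s-1) f δ`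
stays bounded below, which forces `s ≤ D` (a ball around a point of `O ∩ F` gives the start).

In the lattice case `rᵢ = ρ^mᵢ`, so along the scales `ρ^ℓ g` the renewal inequality telescopes:
the partial sums of `∑ ρ^(ℓ(s-1)) λ(F_{ρ^ℓ g} ∩ Γ)` are bounded. As `s ≤ D` and `ε ≤ g`, this
series dominates the given one termwise for every `ε ∈ (ρg, g]`, uniformly in `ε`.
-/

open scoped Pointwise

theorem eq_add_mul_of_abs_sub_eq_mul {φ : ℝ → ℝ} {r : ℝ}
    (hφ : ∀ x y, |φ x - φ y| = r * |x - y|) (x : ℝ) :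
    φ x = φ 0 + (φ 1 - φ 0) * x := by
  have hsq : ∀ x y, (φ x - φ y) ^ 2 = r ^ 2 * (x - y) ^ 2 := fun x y => by
    rw [← sq_abs, hφ, mul_pow, sq_abs]
  have h1 := hsq 1 0
  have hx0 := hsq x 0
  have hx1 := hsq x 1
  have h : (φ x - (φ 0 + (φ 1 - φ 0) * x)) ^ 2 = 0 := by
    linear_combination (1 - x) * hx0 + x * hx1 + (x ^ 2 - x) * h1
  linarith [pow_eq_zero_iff two_ne_zero |>.1 h]

theorem image_const_add_mul (c k : ℝ) (A : Set ℝ) :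
    (fun x => c + k * x) '' A = c +ᵥ k • A := by
  simp only [← image_smul, ← image_vadd, image_image, smul_eq_mul, vadd_eq_add]

theorem volume_image_const_add_mul (c k : ℝ) (A : Set ℝ) :
    volume ((fun x => c + k * x) '' A) = ENNReal.ofReal |k| * volume A := by
  rw [image_const_add_mul, measure_vadd, Measure.addHaar_smul, Module.finrank_self, pow_one]

theorem MeasurableSet.image_const_add_mul {A : Set ℝ} (hA : MeasurableSet A) (c : ℝ) {k : ℝ}
    (hk : k ≠ 0) : MeasurableSet ((fun x => c + k * x) '' A) := by
  rw [_root_.image_const_add_mul]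
  exact (hA.const_smul_of_ne_zero hk).const_vadd c

section WeightedMean

variable {ι : Type*} [Fintype ι] {r : ι → ℝ}

theorem exists_sum_rpow_eq_one [Nonempty ι] (hr0 : ∀ i, 0 < r i) (hr1 : ∀ i, r i < 1) :
    ∃ s : ℝ, 0 ≤ s ∧ ∑ i, r i ^ s = 1 := by
  have hcont : Continuous fun s : ℝ => ∑ i, r i ^ s :=
    continuous_finsetSum _ fun i _ => continuous_const.rpow continuous_id fun _ => .inl (hr0 i).ne'
  have hlim : Tendsto (fun s : ℝ => ∑ i, r i ^ s) atTop (𝓝 0) := by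
    simpa using tendsto_finsetSum Finset.univ fun i _ =>
      tendsto_rpow_atTop_of_base_lt_one _ (by linarith [hr0 i]) (hr1 i)
  obtain ⟨T, hT, hT0⟩ := ((hlim.eventually_le_const one_pos).and (eventually_ge_atTop 0)).exists
  have hone : (1 : ℝ) ≤ ∑ i, r i ^ (0 : ℝ) := by
    simp [Nat.one_le_iff_ne_zero, Fintype.card_ne_zero]
  obtain ⟨s, hs, hs1⟩ := intermediate_value_Icc' hT0 hcont.continuousOn ⟨hT, hone⟩
  exact ⟨s, hs.1, hs1⟩

theorem rpow_mul_add_sum_le (hr : ∀ i, 0 < r i) {h : ℝ → ℝ} {e δ : ℝ} (s : ℝ) (hδ : 0 < δ)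
    (H : e + ∑ i, r i * h (δ / r i) ≤ h δ) :
    δ ^ (s - 1) * e + ∑ i, r i ^ s * ((δ / r i) ^ (s - 1) * h (δ / r i)) ≤
      δ ^ (s - 1) * h δ := by
  have key : ∀ i, r i ^ s * ((δ / r i) ^ (s - 1) * h (δ / r i)) =
      δ ^ (s - 1) * (r i * h (δ / r i)) := fun i => by
    have hri := hr i
    rw [Real.div_rpow hδ.le hri.le, Real.rpow_sub_one hri.ne']
    field_simp
  simp only [key, ← Finset.mul_sum, ← mul_add]
  exact mul_le_mul_of_nonneg_left H (Real.rpow_nonneg hδ.le _)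

variable [Nonempty ι] {p : ι → ℝ}

theorem le_of_sum_mul_le_of_le_on_Ioc (hr0 : ∀ i, 0 < r i) (hr1 : ∀ i, r i < 1)
    (hp0 : ∀ i, 0 ≤ p i) (hp1 : ∑ i, p i = 1) {t B c : ℝ} (ht : ∀ i, t ≤ r i) {q : ℝ → ℝ}
    (hbase : ∀ δ ∈ Ioc (t * B) B, c ≤ q δ)
    (hstep : ∀ δ ∈ Ioc 0 (t * B), ∑ i, p i * q (δ / r i) ≤ q δ) :
    ∀ δ ∈ Ioc 0 B, c ≤ q δ := by
  intro δ hδ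
  have hB : 0 < B := hδ.1.trans_le hδ.2
  obtain ⟨j, hj⟩ := Finite.exists_max r
  have hrj := hr0 j
  have key : ∀ n : ℕ, ∀ δ ∈ Ioc (r j ^ n * B) B, c ≤ q δ := by
    intro n
    induction n with
    | zero => simp
    | succ n ih =>
      rintro δ ⟨hδn, hδB⟩
      rcases lt_or_ge (t * B) δ with htδ | hδt
      · exact hbase δ ⟨htδ, hδB⟩
      have hδ0 : 0 < δ := lt_of_le_of_lt (by positivity) hδn
      have hmem : ∀ i, δ / r i ∈ Ioc (r j ^ n * B) B := fun i => by
        have hri := hr0 i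
        constructor
        · rw [lt_div_iff₀ hri]
          calc r j ^ n * B * r i ≤ r j ^ n * B * r j := by
                gcongr
                exact hj i
            _ = r j ^ (n + 1) * B := by ring
            _ < δ := hδn
        · rw [div_le_iff₀ hri]
          nlinarith [ht i]
      calc c = ∑ i, p i * c := by rw [← Finset.sum_mul, hp1, one_mul]
        _ ≤ ∑ i, p i * q (δ / r i) := by
            gcongr with i
            · exact hp0 i
            · exact ih _ (hmem i)
        _ ≤ q δ := hstep δ ⟨hδ0, hδt⟩
  obtain ⟨n, hn⟩ := exists_pow_lt_of_lt_one (div_pos hδ.1 hB) (hr1 j)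
  exact key n δ ⟨(lt_div_iff₀ hB).1 hn, hδ.2⟩

end WeightedMean

theorem sum_range_add_sub_le {u : ℕ → ℝ} {U : ℝ} (hu0 : ∀ j, 0 ≤ u j) (huU : ∀ j, u j ≤ U)
    (k L : ℕ) : ∑ ℓ ∈ Finset.range L, (u (ℓ + k) - u ℓ) ≤ k * U := by
  induction k generalizing u with
  | zero => simp
  | succ k ih =>
    have hshift := ih (u := fun j => u (j + 1)) (fun j => hu0 _) (fun j => huU _)
    have htel : ∑ ℓ ∈ Finset.range L, (u (ℓ + 1) - u ℓ) ≤ U := by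
      rw [Finset.sum_range_sub]
      linarith [huU L, hu0 0]
    calc ∑ ℓ ∈ Finset.range L, (u (ℓ + (k + 1)) - u ℓ)
        = ∑ ℓ ∈ Finset.range L, (u (ℓ + k + 1) - u (ℓ + 1)) +
            ∑ ℓ ∈ Finset.range L, (u (ℓ + 1) - u ℓ) := by
          rw [← Finset.sum_add_distrib]
          exact Finset.sum_congr rfl fun ℓ _ => by rw [← add_assoc]; ring
      _ ≤ k * U + U := add_le_add hshift htel
      _ = (k + 1 : ℕ) * U := by push_cast; ring

theorem summable_of_add_sum_mul_le {ι : Type*} [Fintype ι] {p : ι → ℝ} (hp0 : ∀ i, 0 ≤ p i)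
    (hp1 : ∑ i, p i = 1) {k : ι → ℕ} {M : ℕ} (hk : ∀ i, k i ≤ M) {a u : ℕ → ℝ} {U : ℝ}
    (ha : ∀ ℓ, 0 ≤ a ℓ) (hu0 : ∀ j, 0 ≤ u j) (huU : ∀ j, u j ≤ U)
    (h : ∀ ℓ, a ℓ + ∑ i, p i * u (ℓ + k i) ≤ u (ℓ + M)) : Summable a := by
  refine summable_of_sum_range_le ha (c := M * U) fun L => ?_
  have hshift : ∀ i, ∑ ℓ ∈ Finset.range L, (u (ℓ + M) - u (ℓ + k i)) ≤ M * U := fun i => by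
    have := sum_range_add_sub_le (u := fun j => u (j + k i)) (fun _ => hu0 _) (fun _ => huU _)
      (M - k i) L
    simp only [add_assoc, Nat.sub_add_cancel (hk i)] at this
    refine this.trans (mul_le_mul_of_nonneg_right (by exact_mod_cast Nat.sub_le M (k i))
      ((hu0 0).trans (huU 0)))
  calc ∑ ℓ ∈ Finset.range L, a ℓ
      ≤ ∑ ℓ ∈ Finset.range L, ∑ i, p i * (u (ℓ + M) - u (ℓ + k i)) := by
        refine Finset.sum_le_sum fun ℓ _ => ?_
        simp only [mul_sub, Finset.sum_sub_distrib, ← Finset.sum_mul, hp1, one_mul]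
        linarith [h ℓ]
    _ = ∑ i, p i * ∑ ℓ ∈ Finset.range L, (u (ℓ + M) - u (ℓ + k i)) := by
        rw [Finset.sum_comm]
        simp only [Finset.mul_sum]
    _ ≤ ∑ i, p i * (M * U) := by
        gcongr with i
        · exact hp0 i
        · exact hshift i
    _ = M * U := by rw [← Finset.sum_mul, hp1, one_mul]

theorem summable_and_tsum_tail_lt_of_le {α : Type*} {f : ℕ → α → ℝ} {a : ℕ → ℝ} {S : Set α}
    (ha : Summable a) (hf0 : ∀ x ∈ S, ∀ ℓ, 0 ≤ f ℓ x) (hfa : ∀ x ∈ S, ∀ ℓ, f ℓ x ≤ a ℓ) :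
    (∀ x ∈ S, Summable fun ℓ => f ℓ x) ∧
      ∀ δ > 0, ∃ n : ℕ, ∀ x ∈ S, ∑' ℓ, f (ℓ + n) x < δ := by
  have hsum : ∀ x ∈ S, Summable fun ℓ => f ℓ x := fun x hx =>
    ha.of_nonneg_of_le (hf0 x hx) (hfa x hx)
  refine ⟨hsum, fun δ hδ => ?_⟩
  obtain ⟨n, hn⟩ := ((tendsto_sum_nat_add a).eventually_lt_const hδ).exists
  refine ⟨n, fun x hx => lt_of_le_of_lt ?_ hn⟩
  exact Summable.tsum_le_tsum (fun ℓ => hfa x hx _) ((summable_nat_add_iff n).2 (hsum x hx))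
    ((summable_nat_add_iff n).2 ha)

theorem HasMinkowskiDim.le_of_le_rpow_mul {F : Set ℝ} {D s c η : ℝ} (hdim : HasMinkowskiDim F D)
    (hc : 0 < c) (hη : 0 < η)
    (h : ∀ ε ∈ Ioc 0 η, c ≤ ε ^ (s - 1) * volume.real (cthickening ε F)) : s ≤ D := by
  have hlim : Tendsto (fun ε => s - Real.log c / Real.log ε) (𝓝[>] 0) (𝓝 s) := by
    simpa using tendsto_const_nhds.sub
      (tendsto_const_nhds.div_atBot Real.tendsto_log_nhdsGT_zero)
  refine le_of_tendsto_of_tendsto hlim hdim ?_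
  filter_upwards [Ioo_mem_nhdsGT (lt_min hη one_pos)] with ε ⟨hε0, hε⟩
  have hlog : Real.log ε < 0 := Real.log_neg hε0 (hε.trans_le (min_le_right _ _))
  have hc' := h ε ⟨hε0, (hε.trans_le (min_le_left _ _)).le⟩
  have hV : 0 < volume.real (cthickening ε F) :=
    pos_of_mul_pos_right (hc.trans_le hc') (Real.rpow_nonneg hε0.le _)
  have hlogc : Real.log c ≤ (s - 1) * Real.log ε + Real.log (volume.real (cthickening ε F)) := by
    rw [← Real.log_rpow hε0, ← Real.log_mul (by positivity) hV.ne']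
    exact Real.log_le_log hc hc'
  have := div_le_div_of_nonpos_of_le hlog.le hlogc
  rw [add_div, mul_div_cancel_right₀ _ hlog.ne] at this
  rw [← measureReal_def]
  linarith

namespace IFS

variable {N : ℕ} (Φ : IFS N)

def slope (i : Fin N) : ℝ := Φ.φ i 1 - Φ.φ i 0

theorem abs_slope (i : Fin N) : |Φ.slope i| = Φ.r i := by
  simpa [slope] using Φ.similar i 1 0

theorem slope_ne_zero (i : Fin N) : Φ.slope i ≠ 0 :=
  abs_pos.1 (Φ.abs_slope i ▸ Φ.r_pos i)

theorem φ_eq (i : Fin N) : Φ.φ i = fun x => Φ.φ i 0 + Φ.slope i * x :=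
  funext (eq_add_mul_of_abs_sub_eq_mul (Φ.similar i))

theorem dist_φ (i : Fin N) (x y : ℝ) : dist (Φ.φ i x) (Φ.φ i y) = Φ.r i * dist x y := by
  simp only [Real.dist_eq, Φ.similar]

theorem φ_surjective (i : Fin N) : Function.Surjective (Φ.φ i) := fun y =>
  ⟨(y - Φ.φ i 0) / Φ.slope i, by rw [Φ.φ_eq]; field_simp [Φ.slope_ne_zero i]; ring⟩

theorem measurableSet_image (i : Fin N) {A : Set ℝ} (hA : MeasurableSet A) :
    MeasurableSet (Φ.φ i '' A) := by
  rw [Φ.φ_eq]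
  exact hA.image_const_add_mul _ (Φ.slope_ne_zero i)

theorem volume_image (i : Fin N) (A : Set ℝ) :
    volume (Φ.φ i '' A) = ENNReal.ofReal (Φ.r i) * volume A := by
  rw [Φ.φ_eq, volume_image_const_add_mul, abs_slope]

theorem measureReal_image (i : Fin N) (A : Set ℝ) :
    volume.real (Φ.φ i '' A) = Φ.r i * volume.real A := by
  simp only [measureReal_def, volume_image, ENNReal.toReal_mul,
    ENNReal.toReal_ofReal (Φ.r_pos i).le]

variable {Φ} {F : Set ℝ}

theorem image_cthickening_inter_subset {i : Fin N} (hF : IsCompact F) (hφF : Φ.φ i '' F ⊆ F)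
    {δ : ℝ} (hδ : 0 ≤ δ) (A : Set ℝ) :
    Φ.φ i '' (cthickening (δ / Φ.r i) F ∩ A) ⊆ cthickening δ F ∩ Φ.φ i '' A := by
  rintro _ ⟨x, ⟨hx, hxA⟩, rfl⟩
  have hri := Φ.r_pos i
  rw [hF.cthickening_eq_biUnion_closedBall (by positivity), mem_iUnion₂] at hx
  obtain ⟨y, hyF, hxy⟩ := hx
  refine ⟨mem_cthickening_of_dist_le _ (Φ.φ i y) _ _ (hφF ⟨y, hyF, rfl⟩) ?_, x, hxA, rfl⟩
  rw [dist_φ, ← le_div_iff₀' hri]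
  exact hxy

namespace IsLatticeBase

variable {ρ : ℝ}

theorem pos (h : Φ.IsLatticeBase ρ) : 0 < ρ := by
  obtain ⟨a, -, rfl, -⟩ := h
  exact Real.exp_pos _

theorem lt_one (h : Φ.IsLatticeBase ρ) : ρ < 1 := by
  obtain ⟨a, ha, rfl, -⟩ := h
  exact Real.exp_lt_one_iff.2 (neg_lt_zero.2 ha)

theorem exists_pow_eq (h : Φ.IsLatticeBase ρ) (i : Fin N) : ∃ m : ℕ, Φ.r i = ρ ^ m := by
  obtain ⟨a, ha, rfl, hlog, -⟩ := h
  obtain ⟨k, hk⟩ := hlog i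
  have hk0 : k ≤ 0 := by
    have : (k : ℝ) * a < 0 := hk ▸ Real.log_neg (Φ.r_pos i) (Φ.r_lt_one i)
    exact_mod_cast (neg_of_mul_neg_left this ha.le).le
  have hcast : (((-k).toNat : ℕ) : ℝ) = -k := by exact_mod_cast Int.toNat_of_nonneg (by omega)
  refine ⟨(-k).toNat, ?_⟩
  rw [← Real.exp_nat_mul, ← Real.exp_log (Φ.r_pos i), hk, hcast]
  ring_nf

end IsLatticeBase

namespace IsAttractor

theorem image_subset_s6 (hF : Φ.IsAttractor F) (i : Fin N) : Φ.φ i '' F ⊆ F :=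
  (subset_iUnion (fun j => Φ.φ j '' F) i).trans_eq hF.2.2

theorem nonempty_index (hF : Φ.IsAttractor F) : Nonempty (Fin N) := by
  obtain ⟨x, hx⟩ := hF.1
  rw [← hF.2.2, map, mem_iUnion] at hx
  exact ⟨hx.choose⟩

theorem measure_cthickening_ne_top (hF : Φ.IsAttractor F) (δ : ℝ) :
    volume (cthickening δ F) ≠ ⊤ :=
  hF.2.1.cthickening.measure_lt_top.ne

theorem measureReal_cthickening_inter_le (hF : Φ.IsAttractor F) (δ : ℝ) (A : Set ℝ) :
    volume.real (cthickening δ F ∩ A) ≤ volume.real (cthickening δ F) :=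
  measureReal_mono inter_subset_left (hF.measure_cthickening_ne_top δ)

theorem cthickening_eq_iUnion (hF : Φ.IsAttractor F) {δ : ℝ} (hδ : 0 ≤ δ) :
    cthickening δ F = ⋃ i, Φ.φ i '' cthickening (δ / Φ.r i) F := by
  refine Subset.antisymm (fun x hx => ?_) (iUnion_subset fun i => by
    simpa using image_cthickening_inter_subset hF.2.1 (hF.image_subset_s6 i) hδ univ)
  rw [hF.2.1.cthickening_eq_biUnion_closedBall hδ, mem_iUnion₂] at hx
  obtain ⟨y, hyF, hxy⟩ := hx
  rw [← hF.2.2, map, mem_iUnion] at hyF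
  obtain ⟨i, z, hzF, rfl⟩ := hyF
  obtain ⟨w, rfl⟩ := Φ.φ_surjective i x
  have hri := Φ.r_pos i
  refine mem_iUnion.2 ⟨i, w, mem_cthickening_of_dist_le w z _ F hzF ?_, rfl⟩
  rw [le_div_iff₀' hri, ← dist_φ]
  exact hxy

theorem measureReal_cthickening_le_sum (hF : Φ.IsAttractor F) {δ : ℝ} (hδ : 0 ≤ δ) :
    volume.real (cthickening δ F) ≤ ∑ i, Φ.r i * volume.real (cthickening (δ / Φ.r i) F) := by
  conv_lhs => rw [hF.cthickening_eq_iUnion hδ]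
  refine (measureReal_iUnion_fintype_le _).trans_eq ?_
  simp only [measureReal_image]

theorem measureReal_gap_add_sum_le (hF : Φ.IsAttractor F) {O : Set ℝ} (hO : Φ.Feasible O)
    {δ : ℝ} (hδ : 0 ≤ δ) :
    volume.real (cthickening δ F ∩ (O \ Φ.map O)) +
        ∑ i, Φ.r i * volume.real (cthickening (δ / Φ.r i) F ∩ O) ≤
      volume.real (cthickening δ F ∩ O) := by
  obtain ⟨-, hOopen, hφO, hdisj⟩ := hO
  set S : Fin N → Set ℝ := fun i => Φ.φ i '' (cthickening (δ / Φ.r i) F ∩ O)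
  have hS : ∀ i, S i ⊆ cthickening δ F ∩ Φ.φ i '' O := fun i =>
    image_cthickening_inter_subset hF.2.1 (hF.image_subset_s6 i) hδ O
  have hSmeas : ∀ i, MeasurableSet (S i) := fun i =>
    Φ.measurableSet_image i (isClosed_cthickening.measurableSet.inter hOopen.measurableSet)
  have hfin : ∀ {A}, A ⊆ cthickening δ F → volume A ≠ ⊤ := fun h =>
    measure_ne_top_of_subset h (hF.measure_cthickening_ne_top δ)
  have hgap : Disjoint (cthickening δ F ∩ (O \ Φ.map O)) (⋃ i, S i) := by
    refine disjoint_iUnion_right.2 fun i => disjoint_left.2 fun x hx hxS => ?_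
    exact hx.2.2 (mem_iUnion.2 ⟨i, (hS i hxS).2⟩)
  have hSdisj : Pairwise (Function.onFun Disjoint S) := fun i j hij =>
    (hdisj i j hij).mono ((hS i).trans inter_subset_right) ((hS j).trans inter_subset_right)
  calc _ = volume.real (cthickening δ F ∩ (O \ Φ.map O)) + ∑ i, volume.real (S i) := by
        simp only [S, measureReal_image]
    _ = volume.real ((cthickening δ F ∩ (O \ Φ.map O)) ∪ ⋃ i, S i) := by
        rw [measureReal_union hgap (MeasurableSet.iUnion hSmeas) (hfin inter_subset_left)
          (hfin (iUnion_subset fun i => (hS i).trans inter_subset_left)),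
          measureReal_iUnion_fintype hSdisj hSmeas fun i =>
            hfin ((hS i).trans inter_subset_left)]
    _ ≤ volume.real (cthickening δ F ∩ O) := by
        refine measureReal_mono (union_subset (inter_subset_inter_right _ sdiff_subset)
          (iUnion_subset fun i => (hS i).trans (inter_subset_inter_right _ (hφO i))))
          (hfin inter_subset_left)

theorem exists_le_rpow_mul_measureReal_cthickening_inter (hF : Φ.IsAttractor F) {O : Set ℝ}
    (hO : Φ.Feasible O) (hOF : (O ∩ F).Nonempty) {s : ℝ} (hs0 : 0 ≤ s) (hs : ∑ i, Φ.r i ^ s = 1) :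
    ∃ c η, 0 < c ∧ 0 < η ∧
      ∀ δ ∈ Ioc 0 η, c ≤ δ ^ (s - 1) * volume.real (cthickening δ F ∩ O) := by
  have := hF.nonempty_index
  obtain ⟨x, hxO, hxF⟩ := hOF
  obtain ⟨η, hη, hball⟩ := Metric.isOpen_iff.1 hO.2.1 x hxO
  obtain ⟨j, hj⟩ := Finite.exists_min Φ.r
  have hrj := Φ.r_pos j
  have hball_le : ∀ δ ∈ Ioc 0 η, 2 * δ ≤ volume.real (cthickening δ F ∩ O) := fun δ hδ => by
    rw [← Real.volume_real_ball (a := x) hδ.1.le]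
    refine measureReal_mono (fun y hy => ⟨?_, hball (ball_subset_ball hδ.2 hy)⟩)
      (measure_ne_top_of_subset inter_subset_left (hF.measure_cthickening_ne_top δ))
    exact mem_cthickening_of_dist_le y x δ F hxF (mem_ball.1 hy).le
  refine ⟨2 * (Φ.r j * η) ^ s, η, by positivity, hη,
    le_of_sum_mul_le_of_le_on_Ioc Φ.r_pos Φ.r_lt_one (p := fun i => Φ.r i ^ s)
      (fun i => Real.rpow_nonneg (Φ.r_pos i).le s) hs hj (fun δ hδ => ?_) (fun δ hδ => ?_)⟩
  · have hδ0 : 0 < δ := (by positivity : 0 < Φ.r j * η).trans hδ.1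
    calc 2 * (Φ.r j * η) ^ s ≤ 2 * δ ^ s := by gcongr; exact hδ.1.le
      _ = δ ^ (s - 1) * (2 * δ) := by rw [Real.rpow_sub_one hδ0.ne']; field_simp
      _ ≤ _ := by gcongr; exact hball_le δ ⟨hδ0, hδ.2⟩
  · have := rpow_mul_add_sum_le Φ.r_pos s hδ.1
      (h := fun δ => volume.real (cthickening δ F ∩ O)) (hF.measureReal_gap_add_sum_le hO hδ.1.le)
    have hgap : 0 ≤ δ ^ (s - 1) * volume.real (cthickening δ F ∩ (O \ Φ.map O)) :=
      mul_nonneg (Real.rpow_nonneg hδ.1.le _) measureReal_nonneg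
    linarith

theorem exists_rpow_mul_measureReal_cthickening_le (hF : Φ.IsAttractor F) {s : ℝ}
    (hs : ∑ i, Φ.r i ^ s = 1) (hs1 : s ≤ 1) (B : ℝ) :
    ∃ C, ∀ δ ∈ Ioc 0 B, δ ^ (s - 1) * volume.real (cthickening δ F) ≤ C := by
  have := hF.nonempty_index
  obtain ⟨j, hj⟩ := Finite.exists_min Φ.r
  have hrj := Φ.r_pos j
  set C := (Φ.r j * B) ^ (s - 1) * volume.real (cthickening B F)
  refine ⟨C, fun δ hδ => ?_⟩
  have := le_of_sum_mul_le_of_le_on_Ioc Φ.r_pos Φ.r_lt_one (p := fun i => Φ.r i ^ s)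
    (fun i => Real.rpow_nonneg (Φ.r_pos i).le s) hs hj (c := -C)
    (q := fun δ => δ ^ (s - 1) * -volume.real (cthickening δ F)) (fun δ hδ => ?_)
    (fun δ hδ => ?_) δ hδ
  · simp only [mul_neg, neg_le_neg_iff] at this
    exact this
  · have hB : 0 < Φ.r j * B := by nlinarith [hδ.1.trans_le hδ.2, Φ.r_lt_one j]
    simp only [mul_neg, neg_le_neg_iff, C]
    exact mul_le_mul (Real.rpow_le_rpow_of_nonpos hB hδ.1.le (by linarith))
      (measureReal_mono (cthickening_mono hδ.2 F) (hF.measure_cthickening_ne_top B))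
      measureReal_nonneg (by positivity)
  · have H : 0 + ∑ i, Φ.r i * -volume.real (cthickening (δ / Φ.r i) F) ≤
        -volume.real (cthickening δ F) := by
      simpa only [zero_add, mul_neg, Finset.sum_neg_distrib, neg_le_neg_iff]
        using hF.measureReal_cthickening_le_sum hδ.1.le
    simpa using rpow_mul_add_sum_le Φ.r_pos s hδ.1 H
      (h := fun δ => -volume.real (cthickening δ F))

theorem summable_rpow_mul_measureReal_cthickening_gap (hF : Φ.IsAttractor F) {O : Set ℝ}
    (hO : Φ.Feasible O) {s : ℝ} (hs : ∑ i, Φ.r i ^ s = 1) (hs1 : s ≤ 1) {ρ : ℝ} (hρ0 : 0 < ρ)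
    (hρ1 : ρ < 1) {m : Fin N → ℕ} (hm : ∀ i, Φ.r i = ρ ^ m i) {g : ℝ} (hg : 0 < g) :
    Summable fun ℓ : ℕ =>
      ρ ^ ((ℓ : ℝ) * (s - 1)) * volume.real (cthickening (ρ ^ ℓ * g) F ∩ (O \ Φ.map O)) := by
  set M := Finset.univ.sup m
  have hmM : ∀ i, m i ≤ M := fun i => Finset.le_sup (Finset.mem_univ i)
  -- Shifting the scales by `ρ ^ M` makes both `ρ ^ ℓ * g` and `ρ ^ ℓ * g / rᵢ` of the form
  -- `ρ ^ j * G` with `j : ℕ`.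
  set G := g / ρ ^ M
  obtain ⟨C, hC⟩ := hF.exists_rpow_mul_measureReal_cthickening_le hs hs1 G
  set q : ℝ → ℝ := fun δ => δ ^ (s - 1) * volume.real (cthickening δ F ∩ O)
  have hscale : ∀ ℓ, ρ ^ (ℓ + M) * G = ρ ^ ℓ * g := fun ℓ => by
    simp only [G, pow_add]
    field_simp
  have hscale_div : ∀ ℓ i, ρ ^ (ℓ + (M - m i)) * G = ρ ^ ℓ * g / Φ.r i := fun ℓ i => by
    rw [← hscale, hm i, eq_div_iff (by positivity), mul_right_comm, ← pow_add]
    congr 2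
    have := hmM i
    omega
  have hsum : Summable fun ℓ : ℕ =>
      (ρ ^ ℓ * g) ^ (s - 1) * volume.real (cthickening (ρ ^ ℓ * g) F ∩ (O \ Φ.map O)) := by
    refine summable_of_add_sum_mul_le (p := fun i => Φ.r i ^ s) (k := fun i => M - m i)
      (u := fun j => q (ρ ^ j * G)) (U := C) (fun i => Real.rpow_nonneg (Φ.r_pos i).le s) hs
      (fun i => Nat.sub_le M (m i)) (fun ℓ => by positivity) (fun j => by positivity)
      (fun j => ?_) (fun ℓ => ?_)
    · have hpos : 0 < ρ ^ j * G := by positivity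
      refine le_trans ?_ (hC _ ⟨hpos, mul_le_of_le_one_left (by positivity)
        (pow_le_one₀ hρ0.le hρ1.le)⟩)
      exact mul_le_mul_of_nonneg_left (hF.measureReal_cthickening_inter_le _ O) (by positivity)
    · simp only [q, hscale, hscale_div]
      exact rpow_mul_add_sum_le Φ.r_pos s (by positivity)
        (h := fun δ => volume.real (cthickening δ F ∩ O))
        (hF.measureReal_gap_add_sum_le hO (by positivity))
  refine (hsum.mul_left (g ^ (1 - s))).congr fun ℓ => ?_
  rw [Real.mul_rpow (by positivity) hg.le, Real.rpow_natCast_mul hρ0.le, ← mul_assoc,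
    mul_left_comm, ← Real.rpow_add hg]
  simp

end IsAttractor

end IFS

theorem series_converges_uniformly_general {N : ℕ} (Φ : IFS N)
    (F O : Set ℝ) (D ρ : ℝ) (hF : Φ.IsAttractor F) (hbase : Φ.IsLatticeBase ρ)
    (hfeas : Φ.Feasible O) (hstrong : (O ∩ F).Nonempty)
    (hdim : HasMinkowskiDim F D) (hD : D < 1) :
    let Γ : Set ℝ := O \ Φ.map O
    let g : ℝ := sSup ((fun x => Metric.infDist x F) '' Γ)
    let term : ℕ → ℝ → ℝ := fun ℓ ε => ρ ^ ((ℓ : ℝ) * (D - 1)) *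
      (volume (Metric.cthickening (ρ ^ ℓ * ε) F ∩ Γ)).toReal
    (∀ ε ∈ Set.Ioc (ρ * g) g, Summable fun ℓ : ℕ => term ℓ ε) ∧
      ∀ δ > (0:ℝ), ∃ n : ℕ, ∀ ε ∈ Set.Ioc (ρ * g) g,
        (∑' ℓ : ℕ, term (ℓ + n) ε) < δ := by
  intro Γ g term
  have hρ0 := hbase.pos
  rcases le_or_gt g 0 with hg | hg
  · have : Ioc (ρ * g) g = ∅ := Ioc_eq_empty (by nlinarith [hbase.lt_one])
    simp [this]
  have := hF.nonempty_index
  obtain ⟨s, hs0, hs⟩ := exists_sum_rpow_eq_one Φ.r_pos Φ.r_lt_one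
  have hsD : s ≤ D := by
    obtain ⟨c, η, hc, hη, hlow⟩ :=
      hF.exists_le_rpow_mul_measureReal_cthickening_inter hfeas hstrong hs0 hs
    refine hdim.le_of_le_rpow_mul hc hη fun ε hε => (hlow ε hε).trans ?_
    exact mul_le_mul_of_nonneg_left (hF.measureReal_cthickening_inter_le ε O)
      (Real.rpow_nonneg hε.1.le _)
  choose m hm using hbase.exists_pow_eq
  refine summable_and_tsum_tail_lt_of_le (hF.summable_rpow_mul_measureReal_cthickening_gap hfeas
    hs (hsD.trans hD.le) hρ0 hbase.lt_one hm hg) (fun ε _ ℓ => by positivity) fun ε hε ℓ => ?_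
  refine mul_le_mul (Real.rpow_le_rpow_of_exponent_ge hρ0 hbase.lt_one.le ?_)
    (measureReal_mono (inter_subset_inter_left _ (cthickening_mono ?_ F)) ?_)
    measureReal_nonneg (by positivity)
  · exact mul_le_mul_of_nonneg_left (by linarith) (Nat.cast_nonneg ℓ)
  · exact mul_le_mul_of_nonneg_left hε.2 (by positivity)
  · exact measure_ne_top_of_subset inter_subset_left (hF.measure_cthickening_ne_top _)

/-- The series `Σ_ℓ ρ^(ℓ(D-1)) λ(F_{ρ^ℓ ε} ∩ Γ)` converges
uniformly in `ε` on `(ρg, g]`. -/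
theorem series_converges_uniformly {N : ℕ} (hN : 2 ≤ N) (Φ : IFS N)
    (F O : Set ℝ) (D ρ : ℝ) (hF : Φ.IsAttractor F) (hbase : Φ.IsLatticeBase ρ)
    (hfeas : Φ.Feasible O) (hstrong : (O ∩ F).Nonempty) (hproj : Φ.ProjCond F O)
    (hdim : HasMinkowskiDim F D) (hD : D < 1) :
    let Γ : Set ℝ := O \ Φ.map O
    let g : ℝ := sSup ((fun x => Metric.infDist x F) '' Γ)
    let term : ℕ → ℝ → ℝ := fun ℓ ε => ρ ^ ((ℓ : ℝ) * (D - 1)) *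
      (volume (Metric.cthickening (ρ ^ ℓ * ε) F ∩ Γ)).toReal
    (∀ ε ∈ Set.Ioc (ρ * g) g, Summable fun ℓ : ℕ => term ℓ ε) ∧
      ∀ δ > (0:ℝ), ∃ n : ℕ, ∀ ε ∈ Set.Ioc (ρ * g) g,
        (∑' ℓ : ℕ, term (ℓ + n) ε) < δ :=
  series_converges_uniformly_general Φ F O D ρ hF hbase hfeas hstrong hdim hD
end

section
/- Let Φ be an IFS on ℝ satisfying the open set condition whose self-similar set F is nontrivial (Minkowski dimension < 1), and let U be a compatible feasible open set for Φ (i.e. ∂U ⊆ F). Set Γ = U \ ΦU and G = U \ closure(ΦU). Then Γ \ G ⊆ F and λ(Γ \ G) = 0; consequently λ(F_t ∩ Γ) = λ(F_t ∩ G) for every t > 0. -/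
/-!
Each similarity of `ℝ` is a dilation, hence a closed embedding, so it commutes with closures and
`closure (ΦU) \ ΦU ⊆ Φ(closure U \ U) = Φ(∂U) ⊆ ΦF = F`. A bounded set of Minkowski dimension
`< 1` is Lebesgue-null, so `Γ` and `G` differ by a null set.
-/

open Set Filter MeasureTheory Metric Topology

namespace IFS

variable {N : ℕ}

theorem isClosedEmbedding_φ (Φ : IFS N) (i : Fin N) : IsClosedEmbedding (Φ.φ i) :=
  Dilation.isClosedEmbedding <| Dilation.mkOfDistEq (Φ.φ i)
    ⟨⟨Φ.r i, (Φ.r_pos i).le⟩, fun h => (Φ.r_pos i).ne' (congrArg NNReal.toReal h), fun x y => by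
      rw [Real.dist_eq, Real.dist_eq]; exact Φ.similar i x y⟩

theorem map_mono (Φ : IFS N) {A B : Set ℝ} (h : A ⊆ B) : Φ.map A ⊆ Φ.map B :=
  iUnion_mono fun _ => image_mono h

theorem closure_map (Φ : IFS N) (A : Set ℝ) : closure (Φ.map A) = Φ.map (closure A) := by
  simp only [map, closure_iUnion_of_finite, (Φ.isClosedEmbedding_φ _).closure_image_eq]

theorem closure_map_diff_subset (Φ : IFS N) (A : Set ℝ) :
    closure (Φ.map A) \ Φ.map A ⊆ Φ.map (closure A \ A) := by
  rw [closure_map]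
  rintro _ ⟨hx, hxA⟩
  obtain ⟨i, y, hy, rfl⟩ := mem_iUnion.mp hx
  exact mem_iUnion.mpr ⟨i, y, ⟨hy, fun hyA => hxA (mem_iUnion.mpr ⟨i, y, hyA, rfl⟩)⟩, rfl⟩

end IFS

theorem HasMinkowskiDim.volume_eq_zero {F : Set ℝ} {D : ℝ} (hdim : HasMinkowskiDim F D)
    (hD : D < 1) (hF : Bornology.IsBounded F) : volume F = 0 := by
  by_contra hne
  set m := (volume F).toReal
  have hm : 0 < m := ENNReal.toReal_pos hne hF.measure_lt_top.ne
  -- `λ(F_ε) ≥ λ(F) > 0`, so the defining quotient is at least `1 - log m / log ε → 1`.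
  have hlower : ∀ᶠ ε in 𝓝[>] (0 : ℝ), 1 - Real.log m / Real.log ε ≤
      1 - Real.log (volume (cthickening ε F)).toReal / Real.log ε := by
    filter_upwards [Ioo_mem_nhdsGT (zero_lt_one' ℝ)] with ε ⟨hε0, hε1⟩
    have hmv : m ≤ (volume (cthickening ε F)).toReal :=
      ENNReal.toReal_mono hF.cthickening.measure_lt_top.ne
        (measure_mono (self_subset_cthickening F))
    have := div_le_div_of_nonpos_of_le (Real.log_neg hε0 hε1).le (Real.log_le_log hm hmv)
    linarith
  have hlim : Tendsto (fun ε : ℝ => 1 - Real.log m / Real.log ε) (𝓝[>] 0) (𝓝 1) := by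
    simpa only [div_eq_mul_inv, Pi.inv_apply, mul_zero, sub_zero] using
      (Real.tendsto_log_nhdsGT_zero.inv_tendsto_atBot.const_mul (Real.log m)).const_sub 1
  exact hD.not_ge (le_of_tendsto_of_tendsto hlim hdim hlower)

theorem gamma_diff_G_null_general {N : ℕ} (Φ : IFS N) (F U : Set ℝ)
    (D : ℝ) (hF : Φ.IsAttractor F) (hdim : HasMinkowskiDim F D)
    (hD : D < 1) (hfeas : Φ.Feasible U) (hcomp : frontier U ⊆ F) :
    let Γ : Set ℝ := U \ Φ.map U
    let G : Set ℝ := U \ closure (Φ.map U)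
    Γ \ G ⊆ F ∧ volume (Γ \ G) = 0 ∧
      ∀ t > (0:ℝ), volume (Metric.cthickening t F ∩ Γ) =
        volume (Metric.cthickening t F ∩ G) := by
  intro Γ G
  have hsub : Γ \ G ⊆ F := by
    rintro x ⟨⟨hxU, hxΦU⟩, hxG⟩
    have hx : x ∈ closure (Φ.map U) \ Φ.map U := ⟨not_not.mp fun h => hxG ⟨hxU, h⟩, hxΦU⟩
    rw [← hF.2.2]
    refine Φ.map_mono ?_ (Φ.closure_map_diff_subset U hx)
    rwa [← hfeas.2.1.frontier_eq]
  have hnull : volume (Γ \ G) = 0 :=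
    measure_mono_null hsub (hdim.volume_eq_zero hD hF.2.1.isBounded)
  have hGΓ : G ⊆ Γ := fun x hx => ⟨hx.1, fun h => hx.2 (subset_closure h)⟩
  have hGΓ_ae : G =ᵐ[volume] Γ :=
    ae_eq_set.mpr ⟨by rw [sdiff_eq_empty.mpr hGΓ, measure_empty], hnull⟩
  exact ⟨hsub, hnull, fun t _ => measure_congr (EventuallyEq.rfl.inter hGΓ_ae.symm)⟩

/-- For a compatible feasible open set `U` of an OSC-IFS with
nontrivial attractor `F`, and `Γ = U \ ΦU`, `G = U \ closure(ΦU)`, one has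
`Γ \ G ⊆ F`, `λ(Γ \ G) = 0` and `λ(F_t ∩ Γ) = λ(F_t ∩ G)` for every `t > 0`. -/
theorem gamma_diff_G_null {N : ℕ} (hN : 2 ≤ N) (Φ : IFS N) (F U : Set ℝ)
    (D : ℝ) (hOSC : Φ.OSC) (hF : Φ.IsAttractor F) (hdim : HasMinkowskiDim F D)
    (hD : D < 1) (hfeas : Φ.Feasible U) (hcomp : frontier U ⊆ F) :
    let Γ : Set ℝ := U \ Φ.map U
    let G : Set ℝ := U \ closure (Φ.map U)
    Γ \ G ⊆ F ∧ volume (Γ \ G) = 0 ∧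
      ∀ t > (0:ℝ), volume (Metric.cthickening t F ∩ Γ) =
        volume (Metric.cthickening t F ∩ G) :=
  gamma_diff_G_null_general Φ F U D hF hdim hD hfeas hcomp
end

section
/- Define φ_1, φ_2, φ_3 : ℝ → ℝ by φ_1(x) = x/4, φ_2(x) = (x+1)/4, φ_3(x) = (x+6)/4 and let Φ = {φ_1, φ_2, φ_3}. The self-similar set F of Φ satisfies F ⊆ [0, 2] with 0, 2 ∈ F, so the interior of the convex hull of F is I = (0, 2). Then for every m ∈ ℕ₀ one has φ_1(Φ^m I) ∩ φ_2(Φ^m I) ≠ ∅; in particular, Φ^m I is not a feasible open set for Φ for any m ∈ ℕ₀. -/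
open Set Filter MeasureTheory Metric Topology

/-!
The maps are increasing, so the extreme points of `F` are fixed points of some `φ i`; this forces
`min F = 0` and `max F = 2`. For the iterates, note that `φ₂(u + 1) = φ₃(u) - 1`: if `u` and `u + 1`
both lie in a set `A`, then so do `u' = (u + 2)/4` and `u' + 1` in `ΦA`. Starting from `u = 1/2` in
`I`, every `Φ^m I` contains such a pair, and `φ₁(u + 1) = φ₂(u)` lies in both images.
-/

theorem convexHull_eq_Icc_of_isLeast_of_isGreatest {𝕜 : Type*} [Field 𝕜] [LinearOrder 𝕜]
    [IsStrictOrderedRing 𝕜] {s : Set 𝕜} {a b : 𝕜} (ha : IsLeast s a) (hb : IsGreatest s b) :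
    convexHull 𝕜 s = Icc a b := by
  refine (convexHull_min (fun _ hx => mem_Icc.2 ⟨ha.2 hx, hb.2 hx⟩) (convex_Icc a b)).antisymm ?_
  rw [← segment_eq_Icc (ha.2 hb.1)]
  exact segment_subset_convexHull ha.1 hb.1

namespace IFS

section

variable {N : ℕ} (Φ : IFS N)

@[simp]
theorem mem_map {A : Set ℝ} {x : ℝ} : x ∈ Φ.map A ↔ ∃ i, ∃ y ∈ A, Φ.φ i y = x := by
  simp [map]

theorem apply_mem_of_map_eq {F : Set ℝ} (hF : Φ.map F = F) {x : ℝ} (hx : x ∈ F) (i : Fin N) :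
    Φ.φ i x ∈ F :=
  hF ▸ Φ.mem_map.2 ⟨i, x, hx, rfl⟩

theorem exists_apply_eq_of_isGreatest {F : Set ℝ} (hF : Φ.map F = F)
    (hmono : ∀ i, Monotone (Φ.φ i)) {M : ℝ} (hM : IsGreatest F M) : ∃ i, Φ.φ i M = M := by
  obtain ⟨i, y, hy, hyM⟩ := Φ.mem_map.1 (hF.symm ▸ hM.1)
  refine ⟨i, (hM.2 (Φ.apply_mem_of_map_eq hF hM.1 i)).antisymm ?_⟩
  calc M = Φ.φ i y := hyM.symm
    _ ≤ Φ.φ i M := hmono i (hM.2 hy)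

theorem exists_apply_eq_of_isLeast {F : Set ℝ} (hF : Φ.map F = F)
    (hmono : ∀ i, Monotone (Φ.φ i)) {m : ℝ} (hm : IsLeast F m) : ∃ i, Φ.φ i m = m := by
  obtain ⟨i, y, hy, hym⟩ := Φ.mem_map.1 (hF.symm ▸ hm.1)
  refine ⟨i, le_antisymm ?_ (hm.2 (Φ.apply_mem_of_map_eq hF hm.1 i))⟩
  calc Φ.φ i m ≤ Φ.φ i y := hmono i (hm.2 hy)
    _ = m := hym

theorem not_feasible_of_inter_nonempty {O : Set ℝ} {i j : Fin N} (hij : i ≠ j)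
    (h : (Φ.φ i '' O ∩ Φ.φ j '' O).Nonempty) : ¬ Φ.Feasible O :=
  fun hO => not_disjoint_iff_nonempty_inter.2 h (hO.2.2.2 i j hij)

end

section

variable {Φ : IFS 3}

theorem quarter_monotone (h0 : Φ.φ 0 = fun x => x / 4) (h1 : Φ.φ 1 = fun x => (x + 1) / 4)
    (h2 : Φ.φ 2 = fun x => (x + 6) / 4) (i : Fin 3) : Monotone (Φ.φ i) := by
  intro x y hxy
  obtain rfl | rfl | rfl : i = 0 ∨ i = 1 ∨ i = 2 := by omega
  all_goals simp only [h0, h1, h2]; linarith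

theorem quarter_eq_two_of_isGreatest (h0 : Φ.φ 0 = fun x => x / 4)
    (h1 : Φ.φ 1 = fun x => (x + 1) / 4) (h2 : Φ.φ 2 = fun x => (x + 6) / 4) {F : Set ℝ}
    (hF : Φ.map F = F) {M : ℝ} (hM : IsGreatest F M) : M = 2 := by
  have h2M : (M + 6) / 4 ≤ M := by simpa only [h2] using hM.2 (Φ.apply_mem_of_map_eq hF hM.1 2)
  obtain ⟨i, hi⟩ := Φ.exists_apply_eq_of_isGreatest hF (quarter_monotone h0 h1 h2) hM
  obtain rfl | rfl | rfl : i = 0 ∨ i = 1 ∨ i = 2 := by omega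
  all_goals simp only [h0, h1, h2] at hi; linarith

theorem quarter_eq_zero_of_isLeast (h0 : Φ.φ 0 = fun x => x / 4)
    (h1 : Φ.φ 1 = fun x => (x + 1) / 4) (h2 : Φ.φ 2 = fun x => (x + 6) / 4) {F : Set ℝ}
    (hF : Φ.map F = F) {m : ℝ} (hm : IsLeast F m) : m = 0 := by
  have h0m : m ≤ m / 4 := by simpa only [h0] using hm.2 (Φ.apply_mem_of_map_eq hF hm.1 0)
  obtain ⟨i, hi⟩ := Φ.exists_apply_eq_of_isLeast hF (quarter_monotone h0 h1 h2) hm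
  obtain rfl | rfl | rfl : i = 0 ∨ i = 1 ∨ i = 2 := by omega
  all_goals simp only [h0, h1, h2] at hi; linarith

theorem quarter_exists_add_one_mem_map (h1 : Φ.φ 1 = fun x => (x + 1) / 4)
    (h2 : Φ.φ 2 = fun x => (x + 6) / 4) {A : Set ℝ} (hA : ∃ u ∈ A, u + 1 ∈ A) :
    ∃ u ∈ Φ.map A, u + 1 ∈ Φ.map A := by
  obtain ⟨u, hu, hu1⟩ := hA
  refine ⟨(u + 2) / 4, Φ.mem_map.2 ⟨1, u + 1, hu1, ?_⟩, Φ.mem_map.2 ⟨2, u, hu, ?_⟩⟩ <;>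
    simp only [h1, h2] <;> ring

theorem quarter_exists_add_one_mem_iterate (h1 : Φ.φ 1 = fun x => (x + 1) / 4)
    (h2 : Φ.φ 2 = fun x => (x + 6) / 4) (m : ℕ) :
    ∃ u ∈ Φ.map^[m] (Ioo 0 2), u + 1 ∈ Φ.map^[m] (Ioo 0 2) :=
  Function.Iterate.rec (fun A => ∃ u ∈ A, u + 1 ∈ A) ⟨1 / 2, by norm_num, by norm_num⟩
    (fun _ => quarter_exists_add_one_mem_map h1 h2) m

end

end IFS

/-- For the IFS `φ₁(x) = x/4`, `φ₂(x) = (x+1)/4`, `φ₃(x) = (x+6)/4`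
with attractor `F`, one has `F ⊆ [0,2]`, `0, 2 ∈ F` (so the interior of the
convex hull of `F` is `I = (0,2)`), and for every `m ∈ ℕ₀` the sets
`φ₁(Φ^m I)` and `φ₂(Φ^m I)` intersect; in particular, no `Φ^m I` is a feasible
open set for `Φ`. -/
theorem example_iterates_not_feasible (Φ : IFS 3) (F : Set ℝ)
    (h0 : Φ.φ 0 = fun x => x / 4) (h1 : Φ.φ 1 = fun x => (x + 1) / 4)
    (h2 : Φ.φ 2 = fun x => (x + 6) / 4) (hF : Φ.IsAttractor F) :
    F ⊆ Set.Icc 0 2 ∧ (0:ℝ) ∈ F ∧ (2:ℝ) ∈ F ∧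
      interior (convexHull ℝ F) = Set.Ioo 0 2 ∧
      (∀ m : ℕ,
        (Φ.φ 0 '' (Φ.map^[m] (Set.Ioo 0 2)) ∩
          Φ.φ 1 '' (Φ.map^[m] (Set.Ioo 0 2))).Nonempty) ∧
      ∀ m : ℕ, ¬ Φ.Feasible (Φ.map^[m] (Set.Ioo 0 2)) := by
  obtain ⟨hFne, hFc, hFmap⟩ := hF
  have hleast := hFc.isLeast_sInf hFne
  have hgreatest := hFc.isGreatest_sSup hFne
  rw [IFS.quarter_eq_zero_of_isLeast h0 h1 h2 hFmap hleast] at hleast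
  rw [IFS.quarter_eq_two_of_isGreatest h0 h1 h2 hFmap hgreatest] at hgreatest
  have hinter (m : ℕ) :
      (Φ.φ 0 '' (Φ.map^[m] (Ioo 0 2)) ∩ Φ.φ 1 '' (Φ.map^[m] (Ioo 0 2))).Nonempty := by
    obtain ⟨u, hu, hu1⟩ := IFS.quarter_exists_add_one_mem_iterate h1 h2 m
    exact ⟨(u + 1) / 4, ⟨u + 1, hu1, by rw [h0]⟩, ⟨u, hu, by rw [h1]⟩⟩
  refine ⟨fun x hx => ⟨hleast.2 hx, hgreatest.2 hx⟩, hleast.1, hgreatest.1, ?_, hinter,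
    fun m => Φ.not_feasible_of_inter_nonempty (by decide) (hinter m)⟩
  rw [convexHull_eq_Icc_of_isLeast_of_isGreatest hleast hgreatest, interior_Icc]
end
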